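/- Let F = ℚ(√5). The polynomial x³ + (√5 − 13)x² − 32x + (304 − 144√5) is irreducible over F. -/
import Mathlib

open Polynomial

private lemma rat_sq_ne_five (q : ℚ) : q ^ 2 ≠ 5 := by
  intro h
  have h5 : Irrational (Real.sqrt 5) := (Nat.prime_five).irrational_sqrt
  have hq : ((q : ℝ)) ^ 2 = 5 := by exact_mod_cast congrArg (fun t : ℚ => (t : ℝ)) h
  have h5' : Real.sqrt 5 = |(q : ℝ)| := by
    rw [← hq, Real.sqrt_sq_eq_abs]
  rw [h5'] at h5
  have habs : |(q : ℝ)| = ((|q| : ℚ) : ℝ) := by push_cast; ring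
  rw [habs] at h5
  exact Rat.not_irrational _ h5

private lemma zmod3_key : ∀ x y z : ZMod 3,
    x ^ 3 + 15 * x * y ^ 2 - 13 * x ^ 2 * z - 65 * y ^ 2 * z + 10 * x * y * z
      - 32 * x * z ^ 2 + 304 * z ^ 3 = 0 →
    3 * x ^ 2 * y + 5 * y ^ 3 + x ^ 2 * z + 5 * y ^ 2 * z - 26 * x * y * z
      - 32 * y * z ^ 2 - 144 * z ^ 3 = 0 →
    x = 0 ∧ y = 0 ∧ z = 0 := by decide

private lemma int_descent : ∀ n : ℕ, ∀ x y z : ℤ,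
    x.natAbs + y.natAbs + z.natAbs ≤ n →
    x ^ 3 + 15 * x * y ^ 2 - 13 * x ^ 2 * z - 65 * y ^ 2 * z + 10 * x * y * z
      - 32 * x * z ^ 2 + 304 * z ^ 3 = 0 →
    3 * x ^ 2 * y + 5 * y ^ 3 + x ^ 2 * z + 5 * y ^ 2 * z - 26 * x * y * z
      - 32 * y * z ^ 2 - 144 * z ^ 3 = 0 →
    x = 0 ∧ y = 0 ∧ z = 0 := by
  intro n
  induction n with
  | zero =>
    intro x y z hb _ _
    refine ⟨?_, ?_, ?_⟩ <;> omega
  | succ n ih =>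
    intro x y z hb h1 h2
    have c1 : ((x : ZMod 3)) ^ 3 + 15 * (x : ZMod 3) * (y : ZMod 3) ^ 2
        - 13 * (x : ZMod 3) ^ 2 * (z : ZMod 3) - 65 * (y : ZMod 3) ^ 2 * (z : ZMod 3)
        + 10 * (x : ZMod 3) * (y : ZMod 3) * (z : ZMod 3)
        - 32 * (x : ZMod 3) * (z : ZMod 3) ^ 2 + 304 * (z : ZMod 3) ^ 3 = 0 := by
      have := congrArg (fun t : ℤ => (t : ZMod 3)) h1
      push_cast at this
      exact this
    have c2 : 3 * ((x : ZMod 3)) ^ 2 * (y : ZMod 3) + 5 * (y : ZMod 3) ^ 3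
        + (x : ZMod 3) ^ 2 * (z : ZMod 3) + 5 * (y : ZMod 3) ^ 2 * (z : ZMod 3)
        - 26 * (x : ZMod 3) * (y : ZMod 3) * (z : ZMod 3)
        - 32 * (y : ZMod 3) * (z : ZMod 3) ^ 2 - 144 * (z : ZMod 3) ^ 3 = 0 := by
      have := congrArg (fun t : ℤ => (t : ZMod 3)) h2
      push_cast at this
      exact this
    obtain ⟨hx0, hy0, hz0⟩ := zmod3_key _ _ _ c1 c2
    have hx3 : (3 : ℤ) ∣ x := by
      exact_mod_cast (ZMod.intCast_zmod_eq_zero_iff_dvd x 3).mp hx0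
    have hy3 : (3 : ℤ) ∣ y := by
      exact_mod_cast (ZMod.intCast_zmod_eq_zero_iff_dvd y 3).mp hy0
    have hz3 : (3 : ℤ) ∣ z := by
      exact_mod_cast (ZMod.intCast_zmod_eq_zero_iff_dvd z 3).mp hz0
    obtain ⟨x', rfl⟩ := hx3
    obtain ⟨y', rfl⟩ := hy3
    obtain ⟨z', rfl⟩ := hz3
    have h1' : x' ^ 3 + 15 * x' * y' ^ 2 - 13 * x' ^ 2 * z' - 65 * y' ^ 2 * z'
        + 10 * x' * y' * z' - 32 * x' * z' ^ 2 + 304 * z' ^ 3 = 0 := by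
      have h27 : (27 : ℤ) * (x' ^ 3 + 15 * x' * y' ^ 2 - 13 * x' ^ 2 * z' - 65 * y' ^ 2 * z'
          + 10 * x' * y' * z' - 32 * x' * z' ^ 2 + 304 * z' ^ 3) = 0 := by
        linear_combination h1
      exact (mul_eq_zero.mp h27).resolve_left (by norm_num)
    have h2' : 3 * x' ^ 2 * y' + 5 * y' ^ 3 + x' ^ 2 * z' + 5 * y' ^ 2 * z'
        - 26 * x' * y' * z' - 32 * y' * z' ^ 2 - 144 * z' ^ 3 = 0 := by
      have h27 : (27 : ℤ) * (3 * x' ^ 2 * y' + 5 * y' ^ 3 + x' ^ 2 * z' + 5 * y' ^ 2 * z'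
          - 26 * x' * y' * z' - 32 * y' * z' ^ 2 - 144 * z' ^ 3) = 0 := by
        linear_combination h2
      exact (mul_eq_zero.mp h27).resolve_left (by norm_num)
    have e1 : (3 * x').natAbs = 3 * x'.natAbs := by simp [Int.natAbs_mul]
    have e2 : (3 * y').natAbs = 3 * y'.natAbs := by simp [Int.natAbs_mul]
    have e3 : (3 * z').natAbs = 3 * z'.natAbs := by simp [Int.natAbs_mul]
    rw [e1, e2, e3] at hb
    have hb' : x'.natAbs + y'.natAbs + z'.natAbs ≤ n := by omega
    obtain ⟨hx, hy, hz⟩ := ih x' y' z' hb' h1' h2'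
    subst hx; subst hy; subst hz
    simp

private lemma rat_system (a b : ℚ)
    (h1 : a ^ 3 + 15 * a * b ^ 2 - 13 * a ^ 2 - 65 * b ^ 2 + 10 * a * b - 32 * a + 304 = 0)
    (h2 : 3 * a ^ 2 * b + 5 * b ^ 3 + a ^ 2 + 5 * b ^ 2 - 26 * a * b - 32 * b - 144 = 0) :
    False := by
  have hda : ((a.den : ℚ)) ≠ 0 := by
    exact_mod_cast a.den_nz
  have hdb : ((b.den : ℚ)) ≠ 0 := by
    exact_mod_cast b.den_nz
  have hna : (a.num : ℚ) = a * a.den := by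
    exact ((eq_div_iff hda).mp (Rat.num_div_den a).symm).symm
  have hnb : (b.num : ℚ) = b * b.den := by
    exact ((eq_div_iff hdb).mp (Rat.num_div_den b).symm).symm
  set x : ℤ := a.num * b.den with hxdef
  set y : ℤ := b.num * a.den with hydef
  set z : ℤ := (a.den : ℤ) * b.den with hzdef
  have key1 : x ^ 3 + 15 * x * y ^ 2 - 13 * x ^ 2 * z - 65 * y ^ 2 * z + 10 * x * y * z
      - 32 * x * z ^ 2 + 304 * z ^ 3 = 0 := by
    have : ((x : ℚ)) ^ 3 + 15 * x * (y : ℚ) ^ 2 - 13 * (x : ℚ) ^ 2 * z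
        - 65 * (y : ℚ) ^ 2 * z + 10 * x * y * z - 32 * x * (z : ℚ) ^ 2
        + 304 * (z : ℚ) ^ 3 = 0 := by
      simp only [hxdef, hydef, hzdef]
      push_cast
      rw [hna, hnb]
      linear_combination ((a.den : ℚ) * b.den) ^ 3 * h1
    exact_mod_cast this
  have key2 : 3 * x ^ 2 * y + 5 * y ^ 3 + x ^ 2 * z + 5 * y ^ 2 * z - 26 * x * y * z
      - 32 * y * z ^ 2 - 144 * z ^ 3 = 0 := by
    have : 3 * ((x : ℚ)) ^ 2 * y + 5 * (y : ℚ) ^ 3 + (x : ℚ) ^ 2 * z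
        + 5 * (y : ℚ) ^ 2 * z - 26 * x * y * z - 32 * y * (z : ℚ) ^ 2
        - 144 * (z : ℚ) ^ 3 = 0 := by
      simp only [hxdef, hydef, hzdef]
      push_cast
      rw [hna, hnb]
      linear_combination ((a.den : ℚ) * b.den) ^ 3 * h2
    exact_mod_cast this
  obtain ⟨-, -, hz⟩ :=
    int_descent (x.natAbs + y.natAbs + z.natAbs) x y z le_rfl key1 key2
  rw [hzdef] at hz
  have : (a.den : ℤ) ≠ 0 := by exact_mod_cast a.den_nz
  have : (b.den : ℤ) ≠ 0 := by exact_mod_cast b.den_nz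
  exact absurd hz (by positivity)

/-- Over `F = ℚ(√5)`, the polynomial
`x³ + (√5 − 13)x² − 32x + (304 − 144√5)` is irreducible. -/
theorem stmt_17
    (F : Type*) [Field F] [NumberField F]
    (hrank : Module.finrank ℚ F = 2)
    (sqrt5 : F) (hsqrt5 : sqrt5 ^ 2 = 5) :
    Irreducible (X ^ 3 + C (sqrt5 - 13) * X ^ 2 - C 32 * X + C (304 - 144 * sqrt5) :
      Polynomial F) := by
  have hirr : ∀ q : ℚ, algebraMap ℚ F q ≠ sqrt5 := by
    intro q hq
    apply rat_sq_ne_five q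
    have h5 : (algebraMap ℚ F) (q ^ 2) = (algebraMap ℚ F) 5 := by
      rw [map_pow, hq, hsqrt5, map_ofNat]
    exact (algebraMap ℚ F).injective h5
  have hli : LinearIndependent ℚ ![(1 : F), sqrt5] := by
    rw [LinearIndependent.pair_iff' one_ne_zero]
    intro q hq
    apply hirr q
    rwa [Algebra.smul_def, mul_one] at hq
  have hspan : Submodule.span ℚ (Set.range ![(1 : F), sqrt5]) = ⊤ :=
    hli.span_eq_top_of_card_eq_finrank (by simp [hrank])
  rw [Matrix.range_cons_cons_empty] at hspan
  have hdeg : (X ^ 3 + C (sqrt5 - 13) * X ^ 2 - C 32 * X + C (304 - 144 * sqrt5) :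
      Polynomial F).natDegree = 3 := by
    compute_degree!
  rw [Polynomial.irreducible_iff_roots_eq_zero_of_degree_le_three (by omega) (by omega)]
  rw [Multiset.eq_zero_iff_forall_notMem]
  intro r hrmem
  rw [mem_roots'] at hrmem
  have hr := hrmem.2
  simp only [IsRoot, eval_add, eval_sub, eval_mul, eval_pow, eval_X, eval_C] at hr
  have hrmem2 : r ∈ Submodule.span ℚ ({1, sqrt5} : Set F) := by rw [hspan]; trivial
  obtain ⟨a, b, hab⟩ := Submodule.mem_span_pair.mp hrmem2
  rw [Algebra.smul_def, mul_one, Algebra.smul_def] at hab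
  set A := algebraMap ℚ F a with hA
  set B := algebraMap ℚ F b with hB
  rw [← hab] at hr
  have hu : (algebraMap ℚ F)
        (a ^ 3 + 15 * a * b ^ 2 - 13 * a ^ 2 - 65 * b ^ 2 + 10 * a * b - 32 * a + 304)
      + (algebraMap ℚ F)
        (3 * a ^ 2 * b + 5 * b ^ 3 + a ^ 2 + 5 * b ^ 2 - 26 * a * b - 32 * b - 144) * sqrt5
      = 0 := by
    simp only [map_add, map_sub, map_mul, map_pow, map_ofNat, ← hA, ← hB]
    linear_combination hr - ((3 * A * B ^ 2 + 2 * A * B - 13 * B ^ 2)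
      + sqrt5 * (B ^ 3 + B ^ 2)) * hsqrt5
  have h0 : (a ^ 3 + 15 * a * b ^ 2 - 13 * a ^ 2 - 65 * b ^ 2 + 10 * a * b - 32 * a + 304)
        • (1 : F)
      + (3 * a ^ 2 * b + 5 * b ^ 3 + a ^ 2 + 5 * b ^ 2 - 26 * a * b - 32 * b - 144)
        • sqrt5 = 0 := by
    rw [Algebra.smul_def, mul_one, Algebra.smul_def]
    exact hu
  obtain ⟨hu0, hv0⟩ := LinearIndependent.pair_iff.mp hli _ _ h0
  exact rat_system a b hu0 hv0
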